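/- For all n ≥ 0 and j ≥ 1, ∑_{k=0}^{⌊n/2⌋} C(n,2k) (5/4)^k F_{2j}^{2k} L_{2j(n-2k)} E_{2k} = 2^{1-n} L_{2j}^n. -/

import Mathlib

def lucas : ℕ → ℕ
  | 0 => 2
  | 1 => 1
  | n + 2 => lucas (n + 1) + lucas n

noncomputable def eulerPoly : ℕ → Polynomial ℚ
  | n => Polynomial.X ^ n - Polynomial.C (1/2 : ℚ) *
      ∑ k : Fin n, (n.choose k : ℚ) • eulerPoly k

noncomputable def eulerNumber (n : ℕ) : ℚ := 2 ^ n * (eulerPoly n).eval (1/2)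

open Finset Polynomial

noncomputable def Eu (m : ℕ) : ℝ := ((eulerNumber m : ℚ) : ℝ)

lemma eulerPoly_eval (n : ℕ) : (eulerPoly n).eval (1/2) =
    (1/2 : ℚ)^n - (1/2) * ∑ k ∈ range n, (n.choose k : ℚ) * (eulerPoly k).eval (1/2) := by
  conv_lhs => rw [eulerPoly]
  simp [eval_finset_sum]
  exact Fin.sum_univ_eq_sum_range (fun k => (n.choose k : ℚ) * (eulerPoly k).eval 2⁻¹) n

lemma Eu_zero : Eu 0 = 1 := by
  have h : (eulerPoly 0).eval (2⁻¹) = 1 := by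
    rw [show ((2:ℚ)⁻¹) = 1/2 by norm_num, eulerPoly_eval]; simp
  simp [Eu, eulerNumber, h]

lemma euler_recQ (n : ℕ) :
    2 * eulerNumber n + ∑ k ∈ range n, (n.choose k : ℚ) * eulerNumber k * 2^(n-k) = 2 := by
  have h := eulerPoly_eval n
  have hs : ∀ k ∈ range n, (n.choose k : ℚ) * eulerNumber k * 2^(n-k)
      = 2^n * ((n.choose k : ℚ) * (eulerPoly k).eval (1/2)) := by
    intro k hk
    rw [mem_range] at hk
    have h2 : (2:ℚ)^k * 2^(n-k) = 2^n := by rw [← pow_add]; congr 1; omega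
    unfold eulerNumber
    calc (n.choose k : ℚ) * (2 ^ k * (eulerPoly k).eval (1/2)) * 2^(n-k)
        = (2^k * 2^(n-k)) * ((n.choose k : ℚ) * (eulerPoly k).eval (1/2)) := by ring
      _ = 2^n * ((n.choose k : ℚ) * (eulerPoly k).eval (1/2)) := by rw [h2]
  rw [Finset.sum_congr rfl hs, ← Finset.mul_sum]
  unfold eulerNumber
  have h1 : (2:ℚ)^n * (1/2)^n = 1 := by rw [← mul_pow]; norm_num
  calc 2 * (2 ^ n * (eulerPoly n).eval (1/2)) + 2^n * ∑ k ∈ range n, (n.choose k : ℚ) * (eulerPoly k).eval (1/2)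
      = 2^n * (2 * (eulerPoly n).eval (1/2) + ∑ k ∈ range n, (n.choose k : ℚ) * (eulerPoly k).eval (1/2)) := by ring
    _ = 2^n * (2 * (1/2)^n) := by rw [h]; ring
    _ = 2 := by linear_combination 2 * h1

lemma euler_rec (n : ℕ) :
    2 * Eu n + ∑ k ∈ range n, (n.choose k : ℝ) * Eu k * 2^(n-k) = 2 := by
  have h := euler_recQ n
  have := congrArg (fun q : ℚ => (q : ℝ)) h
  push_cast at this
  simpa [Eu] using this

noncomputable def S (n : ℕ) (y : ℝ) : ℝ :=
  ∑ m ∈ range (n+1), (n.choose m : ℝ) * Eu m * y^(n-m)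

lemma S_two (n : ℕ) : S n 2 = 2 - Eu n := by
  have h := euler_rec n
  rw [S, Finset.sum_range_succ]
  simp only [Nat.choose_self, Nat.cast_one, Nat.sub_self, pow_zero, one_mul, mul_one]
  linarith

lemma S_zero (n : ℕ) : S n 0 = Eu n := by
  rw [S, Finset.sum_eq_single_of_mem n (self_mem_range_succ n)]
  · simp
  · intro m hm hne
    rw [mem_range] at hm
    have : n - m ≠ 0 := by omega
    simp [zero_pow this]

lemma base (n : ℕ) : S n 2 + S n 0 = 2 := by rw [S_two, S_zero]; ring

lemma choose_swap {n m k : ℕ} (h : m + k ≤ n) :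
    n.choose m * (n-m).choose k = n.choose k * (n-k).choose m := by
  have h1 := Nat.choose_mul (n := n) (show m ≤ m + k by omega)
  have h2 := Nat.choose_mul (n := n) (show k ≤ m + k by omega)
  rw [Nat.add_sub_cancel_left] at h1
  rw [Nat.add_sub_cancel] at h2
  have h3 : (m+k).choose m = (m+k).choose k := Nat.choose_symm_add
  rw [← h1, h3, h2]

lemma S_add (n : ℕ) (y t : ℝ) :
    S n (y + t) = ∑ k ∈ range (n+1), (n.choose k : ℝ) * t^k * S (n-k) y := by
  unfold S
  have expand : ∀ m ∈ range (n+1), (n.choose m : ℝ) * Eu m * (y+t)^(n-m)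
      = ∑ k ∈ range (n-m+1), (n.choose m : ℝ) * Eu m * (t^k * y^(n-m-k) * ((n-m).choose k : ℝ)) := by
    intro m _
    rw [add_comm y t, add_pow, Finset.mul_sum]
  rw [Finset.sum_congr rfl expand]
  rw [Finset.sum_comm' (t' := range (n+1)) (s' := fun k => range (n - k + 1))
    (by intro m k; simp only [mem_range]; omega)]
  apply Finset.sum_congr rfl
  intro k hk
  rw [Finset.mul_sum]
  apply Finset.sum_congr rfl
  intro m hm
  rw [mem_range] at hk hm
  have hmk : m + k ≤ n := by omega
  have hcc : (n.choose m : ℝ) * ((n-m).choose k : ℝ) = (n.choose k : ℝ) * ((n-k).choose m : ℝ) := by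
    push_cast [← Nat.cast_mul]
    exact_mod_cast congrArg (fun z : ℕ => (z : ℝ)) (choose_swap hmk)
  have hexp : n - m - k = n - k - m := by omega
  calc (n.choose m : ℝ) * Eu m * (t^k * y^(n-m-k) * ((n-m).choose k : ℝ))
      = ((n.choose m : ℝ) * ((n-m).choose k : ℝ)) * (Eu m * t^k * y^(n-m-k)) := by ring
    _ = ((n.choose k : ℝ) * ((n-k).choose m : ℝ)) * (Eu m * t^k * y^(n-k-m)) := by rw [hcc, hexp]
    _ = (n.choose k : ℝ) * t^k * (((n-k).choose m : ℝ) * Eu m * y^(n-k-m)) := by ring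

lemma keyA (n : ℕ) (x : ℝ) : S n (x+1) + S n (x-1) = 2 * x^n := by
  have h1 : S n (x+1) = S n (2 + (x-1)) := by congr 1; ring
  have h2 : S n (x-1) = S n (0 + (x-1)) := by congr 1; ring
  rw [h1, h2, S_add, S_add, ← Finset.sum_add_distrib]
  have hterm : ∀ k ∈ range (n+1),
      (n.choose k : ℝ) * (x-1)^k * S (n-k) 2 + (n.choose k : ℝ) * (x-1)^k * S (n-k) 0
      = 2 * ((x-1)^k * 1^(n-k) * (n.choose k : ℝ)) := by
    intro k _
    rw [S_two, S_zero]; ring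
  rw [Finset.sum_congr rfl hterm, ← Finset.mul_sum, ← add_pow]
  norm_num

lemma Eu_odd : ∀ m, Odd m → Eu m = 0 := by
  intro m
  induction m using Nat.strong_induction_on with
  | _ n IH =>
    intro hodd
    have hn : n ≠ 0 := by rintro rfl; simp [Nat.odd_iff] at hodd
    have h := keyA n 0
    rw [show (0:ℝ)+1 = 1 by ring, show (0:ℝ)-1 = -1 by ring, zero_pow hn, mul_zero] at h
    have hsum : S n 1 + S n (-1) = 2 * Eu n := by
      unfold S
      rw [← Finset.sum_add_distrib,
        Finset.sum_eq_single_of_mem n (self_mem_range_succ n)]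
      · simp; ring
      · intro m hm hne
        rw [mem_range] at hm
        have hmlt : m < n := by omega
        rcases Nat.even_or_odd m with he | ho
        · have hsub : Odd (n - m) := Nat.Odd.sub_even (by omega) hodd he
          rw [one_pow, hsub.neg_one_pow]; ring
        · rw [IH m hmlt ho]; ring
    rw [hsum] at h
    linarith

lemma scaled (n : ℕ) (s d : ℝ) :
    ∑ m ∈ range (n+1), (n.choose m : ℝ) * Eu m * d^m * ((s+d)^(n-m) + (s-d)^(n-m))
      = 2 * s^n := by
  rcases eq_or_ne d 0 with rfl | hd
  · rw [Finset.sum_eq_single_of_mem 0 (mem_range.2 (by omega))]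
    · simp [Eu_zero]; ring
    · intro m _ hm
      rw [zero_pow hm]; ring
  · have key := keyA n (s/d)
    have e1 : s/d + 1 = (s+d)/d := by field_simp
    have e2 : s/d - 1 = (s-d)/d := by field_simp
    rw [e1, e2] at key
    calc ∑ m ∈ range (n+1), (n.choose m : ℝ) * Eu m * d^m * ((s+d)^(n-m) + (s-d)^(n-m))
        = ∑ m ∈ range (n+1), ((n.choose m : ℝ) * Eu m * (((s+d)/d)^(n-m) + ((s-d)/d)^(n-m))) * d^n := by
          apply Finset.sum_congr rfl
          intro m hm
          rw [mem_range] at hm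
          have hm' : m + (n - m) = n := by omega
          rw [div_pow, div_pow, ← hm', pow_add]
          have hdm : d^(n-m) ≠ 0 := pow_ne_zero _ hd
          field_simp
          rw [Nat.add_sub_cancel_left]
      _ = (S n ((s+d)/d) + S n ((s-d)/d)) * d^n := by
          rw [← Finset.sum_mul]
          congr 1
          rw [S, S, ← Finset.sum_add_distrib]
          apply Finset.sum_congr rfl
          intro m _
          ring
      _ = (2 * (s/d)^n) * d^n := by rw [key]
      _ = 2 * s^n := by
          rw [div_pow]
          have hdn : d^n ≠ 0 := pow_ne_zero _ hd
          field_simp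

open goldenRatio in
lemma lucas_real : ∀ m : ℕ, (lucas m : ℝ) = φ^m + ψ^m := by
  intro m
  induction m using Nat.strong_induction_on with
  | _ m IH =>
    match m with
    | 0 => norm_num [lucas]
    | 1 => rw [show lucas 1 = 1 from rfl, pow_one, pow_one, Real.goldenRatio_add_goldenConj]; norm_num
    | (k+2) =>
      have h1 := IH (k+1) (by omega)
      have h2 := IH k (by omega)
      have hrec : lucas (k+2) = lucas (k+1) + lucas k := rfl
      rw [hrec]
      push_cast
      rw [h1, h2]
      have g1 : φ^(k+2) = φ^(k+1) + φ^k := by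
        have : φ^(k+2) = φ^k * φ^2 := by ring
        rw [this, Real.goldenRatio_sq]; ring
      have g2 : ψ^(k+2) = ψ^(k+1) + ψ^k := by
        have : ψ^(k+2) = ψ^k * ψ^2 := by ring
        rw [this, Real.goldenConj_sq]; ring
      rw [g1, g2]; ring

lemma even_sum (M : ℕ) (g : ℕ → ℝ) (hg : ∀ m, Odd m → g m = 0) :
    ∑ m ∈ range (M+1), g m = ∑ k ∈ range (M/2+1), g (2*k) := by
  rw [← Finset.sum_filter_of_ne (p := fun m => Even m)
    (fun x _ hx => by by_contra hodd; exact hx (hg x (Nat.not_even_iff_odd.mp hodd)))]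
  apply Finset.sum_nbij' (i := fun m => m/2) (j := fun k => 2*k)
  · intro a ha
    simp only [mem_filter, mem_range] at ha
    rw [mem_range]
    omega
  · intro a ha
    rw [mem_range] at ha
    simp only [mem_filter, mem_range]
    constructor
    · omega
    · exact even_two_mul a
  · intro a ha
    simp only [mem_filter, mem_range, Nat.even_iff] at ha
    omega
  · intro a _
    omega
  · intro a ha
    simp only [mem_filter, mem_range, Nat.even_iff] at ha
    congr 1
    omega

theorem stmt13 (n j : ℕ) (hj : 1 ≤ j) :
    ∑ k ∈ Finset.range (n / 2 + 1), (n.choose (2 * k) : ℝ) * (5 / 4 : ℝ) ^ k *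
      (Nat.fib (2 * j) : ℝ) ^ (2 * k) * (lucas (2 * j * (n - 2 * k)) : ℝ) *
      ((eulerNumber (2 * k) : ℚ) : ℝ)
      = (2 : ℝ) ^ ((1 : ℤ) - n) * (lucas (2 * j) : ℝ) ^ n := by
  have h5 : Real.sqrt 5 ^ 2 = 5 := Real.sq_sqrt (by norm_num)
  have h5ne : Real.sqrt 5 ≠ 0 := by positivity
  set a : ℝ := Real.goldenRatio ^ (2*j) with ha
  set b : ℝ := Real.goldenConj ^ (2*j) with hb
  set F : ℝ := (Nat.fib (2*j) : ℝ) with hF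
  set L : ℝ := (lucas (2*j) : ℝ) with hL
  have hFab : F = (a - b) / Real.sqrt 5 := by
    rw [hF, Real.coe_fib_eq]
  have hLab : L = a + b := by rw [hL, lucas_real]
  set d : ℝ := Real.sqrt 5 * F / 2 with hd
  set s : ℝ := L / 2 with hs
  have hsd1 : s + d = a := by
    rw [hs, hd, hFab, hLab]
    field_simp
    ring
  have hsd2 : s - d = b := by
    rw [hs, hd, hFab, hLab]
    field_simp
    ring
  have key := scaled n s d
  rw [hsd1, hsd2] at key
  have hd2 : d^2 = (5/4) * F^2 := by
    rw [hd, div_pow, mul_pow, h5]; ring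
  have hdsq : ∀ k : ℕ, d^(2*k) = (5/4 : ℝ)^k * F^(2*k) := by
    intro k
    rw [pow_mul, hd2, mul_pow, ← pow_mul]
  have hg : ∀ m, Odd m → (n.choose m : ℝ) * Eu m * d^m * (a^(n-m) + b^(n-m)) = 0 := by
    intro m hm
    rw [Eu_odd m hm]; ring
  have hsum := even_sum n (fun m => (n.choose m : ℝ) * Eu m * d^m * (a^(n-m) + b^(n-m))) hg
  have lhs_eq : ∑ k ∈ Finset.range (n / 2 + 1), (n.choose (2 * k) : ℝ) * (5 / 4 : ℝ) ^ k *
      F ^ (2 * k) * (lucas (2 * j * (n - 2 * k)) : ℝ) * Eu (2*k)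
      = ∑ m ∈ range (n+1), (n.choose m : ℝ) * Eu m * d^m * (a^(n-m) + b^(n-m)) := by
    rw [hsum]
    apply Finset.sum_congr rfl
    intro k hk
    rw [mem_range] at hk
    have hla : (lucas (2 * j * (n - 2 * k)) : ℝ) = a^(n-2*k) + b^(n-2*k) := by
      rw [lucas_real, ha, hb, ← pow_mul, ← pow_mul]
    rw [hla, hdsq k]
    ring
  have rhs_eq : (2:ℝ) * s^n = (2 : ℝ) ^ ((1 : ℤ) - n) * L ^ n := by
    rw [hs, div_pow, zpow_sub₀ (two_ne_zero), zpow_one, zpow_natCast]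
    ring
  have hEu : ∀ m : ℕ, ((eulerNumber m : ℚ) : ℝ) = Eu m := fun m => rfl
  simp only [hEu]
  calc ∑ k ∈ Finset.range (n / 2 + 1), (n.choose (2 * k) : ℝ) * (5 / 4 : ℝ) ^ k *
      F ^ (2 * k) * (lucas (2 * j * (n - 2 * k)) : ℝ) * Eu (2*k)
      = ∑ m ∈ range (n+1), (n.choose m : ℝ) * Eu m * d^m * (a^(n-m) + b^(n-m)) := lhs_eq
    _ = 2 * s^n := key
    _ = (2 : ℝ) ^ ((1 : ℤ) - n) * L ^ n := rhs_eq
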